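/- arXiv:2112.02431 — 2 statements merged into one kernel-verified Lean document; each statement's English description precedes it below -/
import Mathlib

section
/- Let V be an infinite-dimensional vector space over a field F. A finite-rank endomorphism φ ∈ I_{ℵ₀} satisfies tr(φ) = 0 if and only if φ ∈ [I_{ℵ₀}, I_{ℵ₀}], the span of commutators of finite-rank endomorphisms. Consequently [I_{ℵ₀}, I_{ℵ₀}] has codimension 1 in I_{ℵ₀}. -/
/-! The trace of a finite-rank `φ` is the trace of its restriction to any finite-dimensional
subspace containing `range φ`. Computing it on `range φ ⊔ range ψ` shows that it is additive and
that `tr (φ ψ) = tr (ψ φ)`, so it vanishes on commutators. Conversely, write `φ = ∑ᵢ fᵢ ⊗ vᵢ`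
as a sum of rank-one maps `f ⊗ v = f.smulRight v` and fix `h u = 1`: then
`fᵢ ⊗ vᵢ - fᵢ vᵢ • h ⊗ u = [h ⊗ vᵢ, fᵢ ⊗ u]`, so `φ - tr φ • h ⊗ u` is a sum of commutators.
Hence the commutators span exactly the kernel of the trace, a surjective functional on
`I_{ℵ₀}`. -/

open Cardinal

variable (F V : Type*) [Field F] [AddCommGroup V] [Module F V]

/-- The ideal `I_α` of endomorphisms of rank `< α` (for an infinite cardinal `α`),
as a subspace of `End F V`. -/
def rankIdeal (α : Cardinal) (hα : ℵ₀ ≤ α) : Submodule F (Module.End F V) where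
  carrier := {φ | LinearMap.rank φ < α}
  zero_mem' := by
    simp only [Set.mem_setOf_eq, LinearMap.rank_zero]
    exact lt_of_lt_of_le aleph0_pos hα
  add_mem' := fun hf hg =>
    lt_of_le_of_lt (LinearMap.rank_add_le _ _) (Cardinal.add_lt_of_lt hα hf hg)
  smul_mem' := by
    intro c f hf
    have h1 : LinearMap.range (c • f) ≤ LinearMap.range f := by
      rintro x ⟨y, rfl⟩
      exact ⟨c • y, by simp⟩
    exact lt_of_le_of_lt (Submodule.rank_mono h1) hf

open LinearMap Module

section FiniteTrace

variable {F V}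

/-- `trace` is `0` on infinite-dimensional spaces, so this is the trace of `φ` only when `φ` has
finite rank. -/
noncomputable def finiteTrace (φ : Module.End F V) : F :=
  trace F (range φ) (φ.restrict fun x _ => mem_range_self φ x)

/-- The two restrictions are the two composites of the corestriction `W → range φ` and the
inclusion `range φ → W`. -/
theorem finiteTrace_eq_trace_restrict {φ : Module.End F V} {W : Submodule F V}
    [FiniteDimensional F W] (hW : range φ ≤ W) :
    finiteTrace φ = trace F W (φ.restrict fun x _ => hW (mem_range_self φ x)) :=
  have := Submodule.finiteDimensional_of_le hW
  trace_comp_comm' (Submodule.inclusion hW)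
    ((φ ∘ₗ W.subtype).codRestrict _ fun x => mem_range_self φ x)

theorem finiteTrace_add (φ ψ : Module.End F V) [FiniteDimensional F (range φ)]
    [FiniteDimensional F (range ψ)] :
    finiteTrace (φ + ψ) = finiteTrace φ + finiteTrace ψ := by
  have hle : range (φ + ψ) ≤ range φ ⊔ range ψ := by
    rintro _ ⟨x, rfl⟩
    exact Submodule.add_mem_sup (mem_range_self φ x) (mem_range_self ψ x)
  rw [finiteTrace_eq_trace_restrict hle,
    finiteTrace_eq_trace_restrict (le_sup_left (b := range ψ)),
    finiteTrace_eq_trace_restrict (le_sup_right (a := range φ)), ← map_add]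
  rfl

theorem finiteTrace_smul (c : F) (φ : Module.End F V) [FiniteDimensional F (range φ)] :
    finiteTrace (c • φ) = c * finiteTrace φ := by
  rw [finiteTrace_eq_trace_restrict (range_smul_le_range φ c), finiteTrace, ← smul_eq_mul,
    ← map_smul]
  rfl

theorem finiteTrace_mul_comm (φ ψ : Module.End F V) [FiniteDimensional F (range φ)]
    [FiniteDimensional F (range ψ)] : finiteTrace (φ * ψ) = finiteTrace (ψ * φ) := by
  have hφ : range (φ * ψ) ≤ range φ ⊔ range ψ := (range_comp_le_range ψ φ).trans le_sup_left
  have hψ : range (ψ * φ) ≤ range φ ⊔ range ψ := (range_comp_le_range φ ψ).trans le_sup_right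
  rw [finiteTrace_eq_trace_restrict hφ, finiteTrace_eq_trace_restrict hψ]
  exact trace_mul_comm F
    (φ.restrict fun x _ => Submodule.mem_sup_left (mem_range_self φ x))
    (ψ.restrict fun x _ => Submodule.mem_sup_right (mem_range_self ψ x))

theorem range_smulRight_le_span_singleton {M N : Type*} [AddCommGroup M] [Module F M]
    [AddCommGroup N] [Module F N] (f : M →ₗ[F] F) (v : N) :
    range (f.smulRight v) ≤ F ∙ v := by
  rintro _ ⟨x, rfl⟩
  exact Submodule.smul_mem _ _ (Submodule.mem_span_singleton_self v)

theorem finiteTrace_smulRight (f : Dual F V) (v : V) : finiteTrace (f.smulRight v) = f v := by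
  rw [finiteTrace_eq_trace_restrict (range_smulRight_le_span_singleton f v)]
  exact trace_smulRight (f ∘ₗ (F ∙ v).subtype) ⟨v, Submodule.mem_span_singleton_self v⟩

theorem eq_sum_smulRight_of_basis {ι N : Type*} [Fintype ι] [AddCommGroup N] [Module F N]
    (φ : V →ₗ[F] N) (b : Basis ι F (range φ)) :
    φ = ∑ i, ((b.coord i) ∘ₗ φ.rangeRestrict).smulRight (b i : N) := by
  ext x
  have hx := congrArg Subtype.val (b.sum_repr (φ.rangeRestrict x))
  simp only [Submodule.coe_sum, Submodule.coe_smul] at hx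
  simpa using hx.symm

theorem exists_finiteDimensional_range_le_map_eq (φ : Module.End F V)
    [FiniteDimensional F (range φ)] :
    ∃ W : Submodule F V, FiniteDimensional F W ∧ range φ ≤ W ∧ W.map φ = range φ := by
  obtain ⟨g, hg⟩ := φ.rangeRestrict.exists_rightInverse_of_surjective (range_rangeRestrict φ)
  refine ⟨range φ ⊔ range g, inferInstance, le_sup_left, map_le_range.antisymm ?_⟩
  have hφg : φ ∘ₗ g = (range φ).subtype := congrArg ((range φ).subtype ∘ₗ ·) hg
  calc range φ = (range g).map φ := by rw [← range_comp, hφg, Submodule.range_subtype]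
    _ ≤ (range φ ⊔ range g).map φ := Submodule.map_mono le_sup_right

theorem exists_dual_apply_eq_one [Nontrivial V] : ∃ (u : V) (h : Dual F V), h u = 1 := by
  obtain ⟨u, hu⟩ := exists_ne (0 : V)
  exact ⟨u, Projective.exists_dual_eq_one F hu⟩

end FiniteTrace

section RankIdeal

variable {F V}

theorem mem_rankIdeal_aleph0_iff {φ : Module.End F V} :
    φ ∈ rankIdeal F V ℵ₀ le_rfl ↔ FiniteDimensional F (range φ) :=
  rank_lt_aleph0_iff

theorem mul_mem_rankIdeal {α : Cardinal} {hα : ℵ₀ ≤ α} {φ : Module.End F V}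
    (hφ : φ ∈ rankIdeal F V α hα) (ψ : Module.End F V) : φ * ψ ∈ rankIdeal F V α hα :=
  (rank_comp_le_left ψ φ).trans_lt hφ

theorem smulRight_mem_rankIdeal (f : Dual F V) (v : V) :
    f.smulRight v ∈ rankIdeal F V ℵ₀ le_rfl :=
  mem_rankIdeal_aleph0_iff.2
    (Submodule.finiteDimensional_of_le (range_smulRight_le_span_singleton f v))

variable (F V) in
noncomputable def finiteTraceₗ : rankIdeal F V ℵ₀ le_rfl →ₗ[F] F where
  toFun φ := finiteTrace (φ : Module.End F V)
  map_add' φ ψ := by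
    have := mem_rankIdeal_aleph0_iff.1 φ.2
    have := mem_rankIdeal_aleph0_iff.1 ψ.2
    exact finiteTrace_add (φ : Module.End F V) ψ
  map_smul' c φ := by
    have := mem_rankIdeal_aleph0_iff.1 φ.2
    exact finiteTrace_smul c (φ : Module.End F V)

theorem finiteTraceₗ_apply (φ : rankIdeal F V ℵ₀ le_rfl) :
    finiteTraceₗ F V φ = finiteTrace (φ : Module.End F V) :=
  rfl

theorem finiteTrace_sum_smulRight {ι : Type*} [Fintype ι] (f : ι → Dual F V) (v : ι → V) :
    finiteTrace (∑ i, (f i).smulRight (v i)) = ∑ i, f i (v i) :=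
  calc finiteTrace (∑ i, (f i).smulRight (v i))
      = finiteTraceₗ F V (∑ i, ⟨(f i).smulRight (v i), smulRight_mem_rankIdeal _ _⟩) := by
        rw [finiteTraceₗ_apply, Submodule.coe_sum]
    _ = ∑ i, f i (v i) := by simp only [map_sum, finiteTraceₗ_apply, finiteTrace_smulRight]

variable (F V) in
/-- `[I_{ℵ₀}, I_{ℵ₀}]`. -/
def finiteRankCommutatorSpan : Submodule F (Module.End F V) :=
  Submodule.span F {x : Module.End F V | ∃ φ' ψ : Module.End F V,
    φ' ∈ rankIdeal F V ℵ₀ le_rfl ∧ ψ ∈ rankIdeal F V ℵ₀ le_rfl ∧ x = φ' * ψ - ψ * φ'}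

theorem finiteRankCommutatorSpan_le_map_ker :
    finiteRankCommutatorSpan F V ≤
      (ker (finiteTraceₗ F V)).map (rankIdeal F V ℵ₀ le_rfl).subtype := by
  refine Submodule.span_le.2 ?_
  rintro _ ⟨φ, ψ, hφ, hψ, rfl⟩
  have := mem_rankIdeal_aleph0_iff.1 hφ
  have := mem_rankIdeal_aleph0_iff.1 hψ
  refine ⟨⟨φ * ψ, mul_mem_rankIdeal hφ ψ⟩ - ⟨ψ * φ, mul_mem_rankIdeal hψ φ⟩, ?_, rfl⟩
  rw [SetLike.mem_coe, mem_ker, map_sub, finiteTraceₗ_apply, finiteTraceₗ_apply, sub_eq_zero]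
  exact finiteTrace_mul_comm φ ψ

theorem smulRight_sub_smul_mem_finiteRankCommutatorSpan {u : V} {h : Dual F V} (hu : h u = 1)
    (f : Dual F V) (v : V) :
    f.smulRight v - f v • h.smulRight u ∈ finiteRankCommutatorSpan F V := by
  refine Submodule.subset_span ⟨h.smulRight v, f.smulRight u, smulRight_mem_rankIdeal h v,
    smulRight_mem_rankIdeal f u, ?_⟩
  ext x
  simp [hu, smul_smul, mul_comm]

theorem sub_finiteTrace_smul_mem_finiteRankCommutatorSpan {u : V} {h : Dual F V} (hu : h u = 1)
    (φ : Module.End F V) [FiniteDimensional F (range φ)] :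
    φ - finiteTrace φ • h.smulRight u ∈ finiteRankCommutatorSpan F V := by
  let b := Module.finBasis F (range φ)
  let f i := (b.coord i) ∘ₗ φ.rangeRestrict
  have hφ : φ = ∑ i, (f i).smulRight (b i : V) := eq_sum_smulRight_of_basis φ b
  have hφ' : φ - finiteTrace φ • h.smulRight u =
      ∑ i, ((f i).smulRight (b i : V) - f i (b i) • h.smulRight u) := by
    rw [Finset.sum_sub_distrib, ← Finset.sum_smul, ← finiteTrace_sum_smulRight, ← hφ]
  rw [hφ']
  exact Submodule.sum_mem _ fun i _ => smulRight_sub_smul_mem_finiteRankCommutatorSpan hu _ _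

theorem ker_finiteTraceₗ [Nontrivial V] :
    ker (finiteTraceₗ F V) =
      (finiteRankCommutatorSpan F V).comap (rankIdeal F V ℵ₀ le_rfl).subtype := by
  refine le_antisymm (fun φ hφ => ?_) ?_
  · obtain ⟨u, h, hu⟩ := exists_dual_apply_eq_one (F := F) (V := V)
    have := mem_rankIdeal_aleph0_iff.1 φ.2
    have hmem := sub_finiteTrace_smul_mem_finiteRankCommutatorSpan hu (φ : Module.End F V)
    rwa [show finiteTrace (φ : Module.End F V) = 0 from hφ, zero_smul, sub_zero] at hmem
  · exact (Submodule.comap_mono finiteRankCommutatorSpan_le_map_ker).trans_eq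
      (Submodule.comap_map_eq_of_injective Subtype.val_injective _)

theorem finiteTraceₗ_surjective [Nontrivial V] :
    Function.Surjective (finiteTraceₗ F V) := by
  obtain ⟨u, h, hu⟩ := exists_dual_apply_eq_one (F := F) (V := V)
  refine fun c => ⟨c • ⟨h.smulRight u, smulRight_mem_rankIdeal h u⟩, ?_⟩
  rw [map_smul, finiteTraceₗ_apply, finiteTrace_smulRight, hu, smul_eq_mul, mul_one]

end RankIdeal

/-- A finite-rank endomorphism has trace zero iff it lies in the span of commutators of
finite-rank endomorphisms; consequently that span has codimension `1` in `I_{ℵ₀}`. -/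
theorem trace_zero_iff_commutator_span (hV : ℵ₀ ≤ Module.rank F V) :
    (∀ tr : Module.End F V →ₗ[F] F,
      (∀ (φ : Module.End F V), φ ∈ rankIdeal F V ℵ₀ le_rfl →
        ∀ (W : Submodule F V) (_ : FiniteDimensional F W)
          (hr : LinearMap.range φ ≤ W) (_ : W.map φ = LinearMap.range φ),
          tr φ = LinearMap.trace F W (LinearMap.restrict φ
            (fun x _ => hr (LinearMap.mem_range_self φ x)))) →
      ∀ φ : Module.End F V, φ ∈ rankIdeal F V ℵ₀ le_rfl →
        (tr φ = 0 ↔ φ ∈ Submodule.span F {x : Module.End F V | ∃ φ' ψ : Module.End F V,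
          φ' ∈ rankIdeal F V ℵ₀ le_rfl ∧ ψ ∈ rankIdeal F V ℵ₀ le_rfl ∧
          x = φ' * ψ - ψ * φ'})) ∧
    Module.rank F (↥(rankIdeal F V ℵ₀ le_rfl) ⧸
      Submodule.comap (rankIdeal F V ℵ₀ le_rfl).subtype
        (Submodule.span F {x : Module.End F V | ∃ φ' ψ : Module.End F V,
          φ' ∈ rankIdeal F V ℵ₀ le_rfl ∧ ψ ∈ rankIdeal F V ℵ₀ le_rfl ∧
          x = φ' * ψ - ψ * φ'})) = 1 := by
  have : Nontrivial V := rank_pos_iff_nontrivial.1 (aleph0_pos.trans_le hV)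
  refine ⟨fun tr htr φ hφ => ?_, ?_⟩
  · have := mem_rankIdeal_aleph0_iff.1 hφ
    obtain ⟨W, hW, hφW, hWφ⟩ := exists_finiteDimensional_range_le_map_eq φ
    rw [htr φ hφ W hW hφW hWφ, ← finiteTrace_eq_trace_restrict hφW]
    exact SetLike.ext_iff.1 ker_finiteTraceₗ ⟨φ, hφ⟩
  · have e := (finiteTraceₗ F V).quotKerEquivOfSurjective finiteTraceₗ_surjective
    rw [ker_finiteTraceₗ] at e
    have he := e.lift_rank_eq
    rwa [rank_self, lift_one, lift_eq_one] at he
end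

section
/- Let V be an infinite-dimensional vector space over a field F of characteristic ≠ 2. Every ideal of the Lie algebra gl(V) is one of: (0), F·Id_V, gl(V); I_α or F·Id_V + I_α for some infinite cardinal α ≤ dim_F V; or a subspace U with [I_{ℵ₀}, gl(V)] ⊆ U ⊆ F·Id_V + I_{ℵ₀}. -/
/-!
If the Lie ideal `U` is commutative, then `[u, [u, a]] = 0` for `u ∈ U`; since `2` is invertible
this forces `[u, a] c [u, a] = 0` for all `c`, hence `[u, a] = 0` as `End V` is semiprime, and `u`
is a scalar.

Otherwise, by the Alahmadi–Alsulami lemma `[x [u, v] y, a] ∈ U` for `u, v ∈ U`, and every `φ` with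
`rank φ ≤ rank [u, v]` is of the form `x [u, v] y`. If some `u ∈ U` lies outside `F 1 + I_β`, a
Zorn argument gives `rank [u, a] ≥ β` for some `a`, and invertibility of `2` again upgrades this to
`rank [u, [u, a']] ≥ β`. As every `φ` of rank `≤ β` is a commutator `[r, ψ]` with `rank r ≤ β`
(shifting along `ℵ₀` disjoint copies of a basis of a space containing `range φ`), `U` then
contains all endomorphisms of rank `≤ β`. Hence for the least `α` with `U ⊆ F 1 + I_α` we get
`I_α ⊆ U` when `α > ℵ₀`, and `U = gl(V)` when there is no such `α`. For `α = ℵ₀`, splitting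
finite-rank maps into rank-one maps and using a single `[p, q] ≠ 0` gives `[I_ℵ₀, gl(V)] ⊆ U`.
-/

open Cardinal

variable (F V : Type*) [Field F] [AddCommGroup V] [Module F V]

variable {F V}

section Ring

variable {A : Type*} [Ring A]

/-- Herstein's `T(U)`. -/
def AddSubgroup.lieIdealizer (U : AddSubgroup A) : Subring A where
  carrier := {x | ∀ a, ⁅x, a⁆ ∈ U}
  mul_mem' {x y} hx hy a := by
    have h : ⁅x * y, a⁆ = ⁅x, y * a⁆ + ⁅y, a * x⁆ := by simp only [Ring.lie_def]; noncomm_ring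
    exact h ▸ add_mem (hx _) (hy _)
  one_mem' a := by simp [Ring.lie_def, U.zero_mem]
  add_mem' {x y} hx hy a := by
    have h : ⁅x + y, a⁆ = ⁅x, a⁆ + ⁅y, a⁆ := by simp only [Ring.lie_def]; noncomm_ring
    exact h ▸ add_mem (hx a) (hy a)
  zero_mem' a := by simp [Ring.lie_def, U.zero_mem]
  neg_mem' {x} hx a := by
    have h : ⁅-x, a⁆ = -⁅x, a⁆ := by simp only [Ring.lie_def]; noncomm_ring
    exact h ▸ neg_mem (hx a)

namespace AddSubgroup

variable {U : AddSubgroup A}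

theorem mem_lieIdealizer_of_mem (hU : ∀ u ∈ U, ∀ a, ⁅u, a⁆ ∈ U) {u : A} (hu : u ∈ U) :
    u ∈ U.lieIdealizer :=
  hU u hu

theorem mul_lie_mem_lieIdealizer (hU : ∀ u ∈ U, ∀ a, ⁅u, a⁆ ∈ U) {u v : A} (hu : u ∈ U)
    (hv : v ∈ U) (x : A) : x * ⁅u, v⁆ ∈ U.lieIdealizer := by
  have h : x * ⁅u, v⁆ = -⁅v, x * u⁆ - ⁅x, v⁆ * u := by simp only [Ring.lie_def]; noncomm_ring
  rw [h]
  refine sub_mem (neg_mem (mem_lieIdealizer_of_mem hU (hU v hv _)))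
    (mul_mem ?_ (mem_lieIdealizer_of_mem hU hu))
  have h' : ⁅x, v⁆ = -⁅v, x⁆ := by simp only [Ring.lie_def]; noncomm_ring
  exact h' ▸ neg_mem (mem_lieIdealizer_of_mem hU (hU v hv x))

/-- The Alahmadi–Alsulami lemma `[id([U,U]), A] ⊆ U`. -/
theorem lie_mul_lie_mul_mem (hU : ∀ u ∈ U, ∀ a, ⁅u, a⁆ ∈ U) {u v : A} (hu : u ∈ U)
    (hv : v ∈ U) (x y a : A) : ⁅x * ⁅u, v⁆ * y, a⁆ ∈ U := by
  have h : x * ⁅u, v⁆ * y = ⁅x * ⁅u, v⁆, y⁆ + y * x * ⁅u, v⁆ := by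
    simp only [Ring.lie_def]; noncomm_ring
  rw [h]
  exact add_mem (mem_lieIdealizer_of_mem hU (mul_lie_mem_lieIdealizer hU hu hv x y))
    (mul_lie_mem_lieIdealizer hU hu hv (y * x)) a

end AddSubgroup

theorem lie_mul_mul_lie_mem_of_forall_lie_lie_mem (I : TwoSidedIdeal A) (h2 : IsUnit (2 : A))
    {u : A} (hu : ∀ a, ⁅u, ⁅u, a⁆⁆ ∈ I) (a b c : A) : ⁅u, a⁆ * c * ⁅u, b⁆ ∈ I := by
  have hmul (a b : A) : ⁅u, a⁆ * ⁅u, b⁆ ∈ I := by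
    have h : 2 * (⁅u, a⁆ * ⁅u, b⁆) = ⁅u, ⁅u, a * b⁆⁆ - ⁅u, ⁅u, a⁆⁆ * b - a * ⁅u, ⁅u, b⁆⁆ := by
      simp only [Ring.lie_def]; noncomm_ring
    have h2I : 2 * (⁅u, a⁆ * ⁅u, b⁆) ∈ I := h ▸ I.sub_mem (I.sub_mem (hu _)
      (I.mul_mem_right _ _ (hu a))) (I.mul_mem_left _ _ (hu b))
    simpa [← mul_assoc] using I.mul_mem_left (↑h2.unit⁻¹) _ h2I
  have h : ⁅u, a⁆ * c * ⁅u, b⁆ = ⁅u, a⁆ * ⁅u, c * b⁆ - ⁅u, a⁆ * ⁅u, c⁆ * b := by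
    simp only [Ring.lie_def]; noncomm_ring
  exact h ▸ I.sub_mem (hmul a (c * b)) (I.mul_mem_right _ _ (hmul a c))

end Ring

theorem Submodule.eq_or_eq_sup_span_singleton_of_le_of_le {K M : Type*} [DivisionRing K]
    [AddCommGroup M] [Module K M] {N U : Submodule K M} {x : M} (hNU : N ≤ U)
    (hU : U ≤ span K {x} ⊔ N) : U = N ∨ U = span K {x} ⊔ N := by
  by_cases h : U ≤ N
  · exact Or.inl (le_antisymm h hNU)
  obtain ⟨u, huU, huN⟩ := SetLike.not_le_iff_exists.mp h
  obtain ⟨y, hy, n, hn, rfl⟩ := mem_sup.mp (hU huU)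
  obtain ⟨c, rfl⟩ := mem_span_singleton.mp hy
  have hc : c ≠ 0 := by rintro rfl; simp_all
  have hx : x ∈ U := by
    have := U.smul_mem c⁻¹ (U.sub_mem huU (hNU hn))
    rwa [add_sub_cancel_right, inv_smul_smul₀ hc] at this
  exact Or.inr (le_antisymm hU (sup_le (span_le.mpr (by simpa using hx)) hNU))

theorem LinearIndependent.exists_linearMap_apply_eq {W ι : Type*} [AddCommGroup W] [Module F W]
    {v : ι → V} (hv : LinearIndependent F v) (w : ι → W) :
    ∃ f : V →ₗ[F] W, ∀ i, f (v i) = w i := by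
  obtain ⟨f, hf⟩ := LinearMap.exists_extend ((Module.Basis.span hv).constr F w)
  refine ⟨f, fun i => ?_⟩
  have := LinearMap.congr_fun hf (Module.Basis.span hv i)
  rwa [LinearMap.comp_apply, Module.Basis.constr_basis, Module.Basis.span_apply] at this

namespace Module.End

theorem exists_eq_mul_mul_of_rank_le {φ w : Module.End F V}
    (h : φ.rank ≤ w.rank) : ∃ b c : Module.End F V, φ = b * w * c := by
  let B := Module.Basis.ofVectorSpace F (LinearMap.range w)
  obtain ⟨j, hj⟩ := Module.Free.exists_linearMap_injective_of_linearIndependent_of_rank_le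
    (M := LinearMap.range φ) (B.linearIndependent) (by rw [B.mk_eq_rank'']; exact h)
  obtain ⟨b, hb⟩ := ((LinearMap.range w).subtype ∘ₗ j).exists_leftInverse_of_injective
    (LinearMap.ker_eq_bot.mpr ((LinearMap.range w).injective_subtype.comp hj))
  obtain ⟨s, hs⟩ := w.rangeRestrict.exists_rightInverse_of_surjective w.range_rangeRestrict
  refine ⟨(LinearMap.range φ).subtype ∘ₗ b, s ∘ₗ j ∘ₗ φ.rangeRestrict, LinearMap.ext fun x => ?_⟩
  have hws (y) : w (s y) = y := congrArg Subtype.val (LinearMap.congr_fun hs y)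
  simpa [hws] using congrArg Subtype.val (LinearMap.congr_fun hb (φ.rangeRestrict x)).symm

theorem exists_le_rank_mul_mul {x y : Module.End F V} {α : Cardinal}
    (hx : α ≤ x.rank) (hy : α ≤ y.rank) : ∃ c : Module.End F V, α ≤ (x * c * y).rank := by
  obtain ⟨sx, hsx, lix⟩ := LinearMap.le_rank_iff_exists_linearIndependent.mp hx
  obtain ⟨sy, hsy, liy⟩ := LinearMap.le_rank_iff_exists_linearIndependent.mp hy
  obtain ⟨e⟩ : Nonempty (sy ≃ sx) := Cardinal.eq.mp (by simp_all)
  obtain ⟨c, hc⟩ := liy.exists_linearMap_apply_eq fun t => (e t : V)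
  refine ⟨c, LinearMap.le_rank_iff_exists_linearIndependent.mpr ⟨sy, hsy, ?_⟩⟩
  have h : (fun t : sy => (x * c * y) t) = (fun t : sx => x t) ∘ e :=
    funext fun t => by simp [hc t]
  exact (h ▸ lix.comp e e.injective : LinearIndependent F _)

theorem eq_zero_of_forall_mul_mul_self_eq_zero {x : Module.End F V} (h : ∀ c, x * c * x = 0) :
    x = 0 := by
  by_contra hx
  have h1 : 1 ≤ x.rank :=
    Cardinal.one_le_iff_ne_zero.mpr (by simpa [LinearMap.rank, LinearMap.range_eq_bot] using hx)
  obtain ⟨c, hc⟩ := exists_le_rank_mul_mul h1 h1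
  simp [h c] at hc

theorem mem_span_one_of_forall_commute {u : Module.End F V} (h : ∀ a, u * a = a * u) :
    u ∈ Submodule.span F {1} := by
  obtain ⟨c, rfl⟩ := (Algebra.IsCentral.mem_center_iff F).mp
    (Subalgebra.mem_center_iff.mpr fun a => (h a).symm)
  exact Submodule.mem_span_singleton.mpr ⟨c, (Algebra.algebraMap_eq_smul_one c).symm⟩

theorem exists_range_sub_smul_one_le {u : Module.End F V} {W : Submodule F V}
    (hu : ∀ x ∉ W, u x ∈ W ⊔ Submodule.span F {x}) :
    ∃ c : F, LinearMap.range (u - c • 1) ≤ W ⊔ W.map u := by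
  -- `u` compressed to a complement `C` of `W` maps each `y` into `F y`, so it is a scalar `c`.
  obtain ⟨C, hC⟩ := W.exists_isCompl
  set p := C.projectionOnto W hC.symm
  have hdep (y : C) : ¬ LinearIndependent F ![y, p (u y)] := by
    obtain rfl | hy0 := eq_or_ne y 0
    · exact fun h => h.ne_zero 0 rfl
    have hyW : (y : V) ∉ W := fun h => hy0 (by simpa using (hC.disjoint.le_bot ⟨h, y.2⟩))
    obtain ⟨w, hw, z, hz, hwz⟩ := Submodule.mem_sup.mp (hu y hyW)
    obtain ⟨t, rfl⟩ := Submodule.mem_span_singleton.mp hz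
    have hp : p (u y) = t • y := by
      rw [← hwz, map_add, Submodule.projectionOnto_apply_of_mem_right _ hw, zero_add, map_smul,
        Submodule.projectionOnto_apply_left]
    rw [hp, LinearIndependent.pair_iff]
    intro h
    simpa using (h t (-1) (by simp)).2
  obtain ⟨c, hc⟩ := LinearMap.exists_eq_smul_id_of_forall_notLinearIndependent
    (f := p ∘ₗ u ∘ₗ C.subtype) hdep
  refine ⟨c, ?_⟩
  rintro _ ⟨x, rfl⟩
  obtain ⟨w, hw, y, hy, rfl⟩ := Submodule.mem_sup.mp (hC.sup_eq_top ▸ Submodule.mem_top (x := x))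
  have hyW : u y - c • y ∈ W := by
    rw [← Submodule.projectionOnto_apply_eq_zero_iff hC.symm, map_sub, map_smul,
      Submodule.projectionOnto_apply_of_mem_left _ hy]
    have := LinearMap.congr_fun hc ⟨y, hy⟩
    simpa [sub_eq_zero] using this
  have h : (u - c • 1) (w + y) = (u y - c • y) - c • w + u w := by
    simp only [LinearMap.sub_apply, LinearMap.smul_apply, Module.End.one_apply, map_add]; abel
  rw [h]
  exact Submodule.add_mem _ (Submodule.mem_sup_left (W.sub_mem hyW (W.smul_mem c hw)))
    (Submodule.mem_sup_right (Submodule.mem_map_of_mem hw))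

theorem exists_le_rank_lie_of_linearIndepOn {u : Module.End F V} {M : Set V}
    (hM : LinearIndepOn F (Sum.elim id u) (Sum.inl '' M ∪ Sum.inr '' M)) :
    ∃ a : Module.End F V, #M ≤ ⁅u, a⁆.rank := by
  obtain ⟨a, ha⟩ := LinearIndependent.exists_linearMap_apply_eq hM
    fun i => Sum.elim id 0 (i : V ⊕ V)
  have hfix (m) (hm : m ∈ M) : a m = m := ha ⟨.inl m, .inl ⟨m, hm, rfl⟩⟩
  have hkill (m) (hm : m ∈ M) : a (u m) = 0 := ha ⟨.inr m, .inr ⟨m, hm, rfl⟩⟩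
  have huM : LinearIndepOn F u M :=
    (hM.mono Set.subset_union_right).comp_of_image Sum.inr_injective.injOn
  refine ⟨a, LinearMap.le_rank_iff_exists_linearIndependent.mpr ⟨M, rfl, huM.congr ?_⟩⟩
  intro m hm
  simp [Ring.lie_def, hfix m hm, hkill m hm]

theorem mem_sup_span_singleton_of_maximal {u : Module.End F V} {M : Set V}
    (hM : Maximal (fun M => LinearIndepOn F (Sum.elim id u) (Sum.inl '' M ∪ Sum.inr '' M)) M)
    {x : V} (hx : x ∉ Submodule.span F (M ∪ u '' M)) :
    u x ∈ Submodule.span F (M ∪ u '' M) ⊔ Submodule.span F {x} := by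
  by_contra hux
  have himage : Sum.elim id u '' (Sum.inl '' M ∪ Sum.inr '' M) = M ∪ u '' M := by
    simp [Set.image_union, Set.image_image]
  have hxM : x ∉ M := fun h => hx (Submodule.subset_span (Or.inl h))
  have hinsert : LinearIndepOn F (Sum.elim id u)
      (insert (.inl x) (insert (.inr x) (Sum.inl '' M ∪ Sum.inr '' M))) := by
    rw [linearIndepOn_insert (by simp [hxM]), linearIndepOn_insert (by simp [hxM]),
      Set.image_insert_eq, himage]
    refine ⟨⟨hM.prop, fun h => hux (Submodule.mem_sup_left h)⟩, fun h => hux ?_⟩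
    rw [sup_comm, ← Submodule.span_insert]
    exact mem_span_insert_exchange h hx
  have : insert x M ⊆ M := hM.le_of_ge (by simpa [Set.image_insert_eq, Set.insert_union,
    Set.union_insert, Set.insert_comm] using hinsert) (Set.subset_insert x M)
  exact hxM (this (Set.mem_insert x M))

theorem exists_le_rank_lie_of_forall_le_rank_sub_smul_one {u : Module.End F V} {α : Cardinal}
    (hα : ℵ₀ ≤ α) (hu : ∀ c : F, α ≤ (u - c • 1).rank) :
    ∃ a : Module.End F V, α ≤ ⁅u, a⁆.rank := by
  set S := {M : Set V | LinearIndepOn F (Sum.elim id u) (Sum.inl '' M ∪ Sum.inr '' M)}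
  have hS : ∀ c ⊆ S, IsChain (· ⊆ ·) c → c.Nonempty → ∃ ub ∈ S, ∀ M ∈ c, M ⊆ ub := by
    intro c hc hchain _
    refine ⟨⋃₀ c, ?_, fun M hM => Set.subset_sUnion_of_mem hM⟩
    have h : Sum.inl '' ⋃₀ c ∪ Sum.inr '' ⋃₀ c = ⋃ M ∈ c, (Sum.inl '' M ∪ Sum.inr '' M) := by
      ext (x | x) <;> simp
    change LinearIndepOn _ _ _
    rw [h]
    refine linearIndepOn_biUnion_of_directed ?_ hc
    intro M hM N hN
    obtain ⟨P, hP, hMP, hNP⟩ := hchain.directedOn M hM N hN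
    exact ⟨P, hP, Set.union_subset_union (Set.image_mono hMP) (Set.image_mono hMP),
      Set.union_subset_union (Set.image_mono hNP) (Set.image_mono hNP)⟩
  -- For a maximal `M`, either `M` is large, or `u` is a scalar modulo `span (M ∪ u '' M)`.
  obtain ⟨M, -, hM⟩ := zorn_subset_nonempty S hS ∅ (by simp [S])
  obtain hαM | hMα := le_or_gt α #M
  · obtain ⟨a, ha⟩ := exists_le_rank_lie_of_linearIndepOn hM.prop
    exact ⟨a, hαM.trans ha⟩
  set W := Submodule.span F (M ∪ u '' M)
  have hW : Module.rank F W < α := (rank_span_le _).trans_lt ((mk_union_le _ _).trans_lt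
    (add_lt_of_lt hα hMα (mk_image_le.trans_lt hMα)))
  obtain ⟨c, hc⟩ := exists_range_sub_smul_one_le fun x hx =>
    mem_sup_span_singleton_of_maximal hM hx
  refine absurd (hu c) (not_le.mpr ?_)
  calc (u - c • 1).rank ≤ Module.rank F ↥(W ⊔ W.map u) := Submodule.rank_mono hc
    _ ≤ Module.rank F W + Module.rank F W := (Submodule.rank_add_le_rank_add_rank _ _).trans
        (by gcongr; exact rank_map_le _ _)
    _ < α := add_lt_of_lt hα hW hW

theorem exists_basis_nat_prod_sum (hV : ℵ₀ ≤ Module.rank F V) (S : Submodule F V) :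
    ∃ (K L : Set V) (b : Module.Basis ((ℕ × K) ⊕ L) F V),
      #K ≤ max (Module.rank F S) ℵ₀ ∧ S ≤ Submodule.span F (Set.range (b ∘ Sum.inl)) := by
  classical
  obtain ⟨B₀, -, hspan, hli⟩ := exists_linearIndependent F (S : Set V)
  replace hli : LinearIndepOn F id B₀ := hli
  rw [Submodule.span_eq] at hspan
  set J := hli.extend (Set.subset_univ B₀)
  set B := Module.Basis.extend hli
  obtain ⟨N, hNJ, hN⟩ := le_mk_iff_exists_subset.mp (B.mk_eq_rank''.symm ▸ hV)
  set K := B₀ ∪ N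
  have hKJ : K ⊆ J := Set.union_subset (hli.subset_extend _) hNJ
  have hK : ℵ₀ ≤ #K := hN ▸ mk_le_mk_of_subset Set.subset_union_right
  obtain ⟨q⟩ : Nonempty (ℕ × K ≃ K) := Cardinal.eq.mp (by simp [aleph0_mul_eq hK])
  let e : (ℕ × K) ⊕ ↥(J \ K) ≃ J := ((Equiv.sumCongr q (Equiv.refl _)).trans
    (Equiv.Set.union disjoint_sdiff_self_right).symm).trans
    (Equiv.setCongr (Set.union_sdiff_cancel hKJ))
  refine ⟨K, J \ K, B.reindex e.symm, ?_, ?_⟩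
  · calc #K ≤ #B₀ + #N := mk_union_le _ _
      _ = Module.rank F S + ℵ₀ := by rw [← rank_span_set hli, hspan, hN]
      _ ≤ max (Module.rank F S) ℵ₀ := by simpa using add_le_max (Module.rank F S) ℵ₀
  · rw [← hspan]
    refine Submodule.span_mono fun x hx => ⟨q.symm ⟨x, Or.inl hx⟩, ?_⟩
    simp [e, B]

theorem exists_eq_lie_of_basis {K L : Type*} (b : Module.Basis ((ℕ × K) ⊕ L) F V)
    {φ : Module.End F V} (hφ : LinearMap.range φ ≤ Submodule.span F (Set.range (b ∘ Sum.inl))) :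
    ∃ r ψ : Module.End F V,
      LinearMap.range r ≤ Submodule.span F (Set.range (b ∘ Sum.inl)) ∧ φ = ⁅r, ψ⁆ := by
  set S := Submodule.span F (Set.range (b ∘ Sum.inl))
  have hbS (n k) : b (.inl (n, k)) ∈ S := Submodule.subset_span ⟨(n, k), rfl⟩
  have hconstr (g : (ℕ × K) ⊕ L → V) (hg : ∀ i, g i ∈ S) (x : V) : b.constr F g x ∈ S := by
    have := LinearMap.mem_range_self (b.constr F g) x
    rw [Module.Basis.constr_range] at this
    exact Submodule.span_le.mpr (Set.range_subset_iff.mpr hg) this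
  let r := b.constr F (Sum.elim (fun | (0, _) => 0 | (n + 1, k) => b (.inl (n, k))) 0)
  let s := b.constr F (Sum.elim (fun p => b (.inl (p.1 + 1, p.2))) 0)
  have hsS (x) : s x ∈ S := hconstr _ (by rintro (⟨n, k⟩ | l) <;> simp [hbS]) x
  have hrs : ∀ x ∈ S, r (s x) = x := LinearMap.eqOn_span' (f := r ∘ₗ s) (g := LinearMap.id)
    (by rintro _ ⟨⟨n, k⟩, rfl⟩; simp [r, s])
  -- `ψ = s (φ + ψ r)`, solved by recursion along each tower `n ↦ b (n, k)`; since `r s = 1`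
  -- on `S ⊇ range φ + range ψ`, it gives `r ψ = φ + ψ r`.
  let t (n : ℕ) (k : K) : V :=
    Nat.rec (motive := fun _ => V) (s (φ (b (.inl (0, k)))))
      (fun n y => s (φ (b (.inl (n + 1, k))) + y)) n
  let ψ := b.constr F (Sum.elim (fun p => t p.1 p.2) fun l => s (φ (b (.inr l))))
  have hψ (i) : ψ (b i) = s (φ (b i) + ψ (r (b i))) := by
    rcases i with ⟨_ | n, k⟩ | l <;> simp [ψ, r, t]
  have hψS (x) : ψ x ∈ S := hconstr _ (fun i => by
    have := hsS (φ (b i) + ψ (r (b i)))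
    rwa [← hψ, Module.Basis.constr_basis] at this) x
  refine ⟨r, ψ, ?_, b.ext fun i => ?_⟩
  · rintro _ ⟨x, rfl⟩
    exact hconstr _ (by rintro (⟨_ | n, k⟩ | l) <;> simp [hbS]) x
  · rw [Ring.lie_def, LinearMap.sub_apply, Module.End.mul_apply, Module.End.mul_apply, hψ,
      hrs _ (add_mem (hφ ⟨_, rfl⟩) (hψS _)), add_sub_cancel_right]

theorem exists_eq_lie_of_rank_le (hV : ℵ₀ ≤ Module.rank F V) {γ : Cardinal} (hγ : ℵ₀ ≤ γ)
    {φ : Module.End F V} (hφ : φ.rank ≤ γ) :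
    ∃ r ψ : Module.End F V, r.rank ≤ γ ∧ φ = ⁅r, ψ⁆ := by
  obtain ⟨K, L, b, hK, hS⟩ := exists_basis_nat_prod_sum hV (LinearMap.range φ)
  obtain ⟨r, ψ, hr, rfl⟩ := exists_eq_lie_of_basis b hS
  refine ⟨r, ψ, ?_, rfl⟩
  calc r.rank ≤ #(Set.range (b ∘ Sum.inl)) := (Submodule.rank_mono hr).trans (rank_span_le _)
    _ ≤ ℵ₀ * #K := by simpa using mk_range_le (f := b ∘ Sum.inl)
    _ ≤ γ * γ := mul_le_mul' hγ (hK.trans (max_le hφ hγ))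
    _ = γ := mul_eq_self hγ

theorem mem_span_rank_le_one_of_rank_lt_aleph0 {φ : Module.End F V} (hφ : φ.rank < ℵ₀) :
    φ ∈ Submodule.span F {ψ : Module.End F V | ψ.rank ≤ 1} := by
  have : Module.Finite F (LinearMap.range φ) := Module.rank_lt_aleph0_iff.mp hφ
  let B := Module.finBasis F (LinearMap.range φ)
  have hsum : φ = ∑ j, ((B.coord j).comp φ.rangeRestrict).smulRight (B j : V) := by
    ext v
    have := congrArg Subtype.val (B.sum_repr (φ.rangeRestrict v))
    simp only [Submodule.coe_sum, Submodule.coe_smul, LinearMap.codRestrict_apply] at this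
    simpa using this.symm
  rw [hsum]
  refine Submodule.sum_mem _ fun j _ => Submodule.subset_span ?_
  calc LinearMap.rank _ ≤ Module.rank F (Submodule.span F {(B j : V)}) := by
        refine Submodule.rank_mono ?_
        rintro _ ⟨x, rfl⟩
        exact Submodule.mem_span_singleton.mpr ⟨_, rfl⟩
    _ ≤ 1 := by simpa using rank_span_le (R := F) {(B j : V)}


theorem mem_span_one_sup_rankIdeal {α : Cardinal} {hα : ℵ₀ ≤ α} {x : Module.End F V} :
    x ∈ Submodule.span F {1} ⊔ rankIdeal F V α hα ↔ ∃ c : F, (x - c • 1).rank < α := by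
  constructor
  · intro hx
    obtain ⟨y, hy, z, hz, rfl⟩ := Submodule.mem_sup.mp hx
    obtain ⟨c, rfl⟩ := Submodule.mem_span_singleton.mp hy
    exact ⟨c, by rwa [add_sub_cancel_left]⟩
  · rintro ⟨c, hc⟩
    exact Submodule.mem_sup.mpr ⟨c • 1,
      Submodule.smul_mem _ _ (Submodule.mem_span_singleton_self _), x - c • 1, hc, add_sub_cancel _ _⟩

def rankTwoSidedIdeal (α : Cardinal) (hα : ℵ₀ ≤ α) : TwoSidedIdeal (Module.End F V) :=
  TwoSidedIdeal.mk' (rankIdeal F V α hα) (zero_mem _) add_mem neg_mem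
    (fun {x y} hy => (LinearMap.rank_comp_le_right y x).trans_lt hy)
    (fun {x y} hx => (LinearMap.rank_comp_le_left y x).trans_lt hx)

theorem mem_rankTwoSidedIdeal {α : Cardinal} {hα : ℵ₀ ≤ α} {φ : Module.End F V} :
    φ ∈ rankTwoSidedIdeal α hα ↔ φ.rank < α :=
  TwoSidedIdeal.mem_mk' _ _ _ _ _ _ _

theorem isUnit_two (h2 : (2 : F) ≠ 0) : IsUnit (2 : Module.End F V) := by
  have := (Ne.isUnit h2).map (algebraMap F (Module.End F V))
  rwa [map_ofNat] at this

theorem exists_le_rank_lie_lie (h2 : (2 : F) ≠ 0) {u : Module.End F V} {α : Cardinal}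
    (hα : ℵ₀ ≤ α) (hu : ∀ c : F, α ≤ (u - c • 1).rank) :
    ∃ a : Module.End F V, α ≤ ⁅u, ⁅u, a⁆⁆.rank := by
  by_contra! h
  obtain ⟨a, ha⟩ := exists_le_rank_lie_of_forall_le_rank_sub_smul_one hα hu
  obtain ⟨c, hc⟩ := exists_le_rank_mul_mul ha ha
  refine hc.not_gt ((mem_rankTwoSidedIdeal (hα := hα)).mp ?_)
  exact lie_mul_mul_lie_mem_of_forall_lie_lie_mem _ (isUnit_two h2)
    (fun a => mem_rankTwoSidedIdeal.mpr (h a)) a a c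

section LieIdeal

variable {U : Submodule F (Module.End F V)}

theorem lie_mem_of_rank_le_rank_lie (hU : ∀ u ∈ U, ∀ a, ⁅u, a⁆ ∈ U) {u v φ : Module.End F V}
    (hu : u ∈ U) (hv : v ∈ U) (hφ : φ.rank ≤ ⁅u, v⁆.rank) (ψ : Module.End F V) : ⁅φ, ψ⁆ ∈ U := by
  obtain ⟨x, y, rfl⟩ := exists_eq_mul_mul_of_rank_le hφ
  exact AddSubgroup.lie_mul_lie_mul_mem (U := U.toAddSubgroup) hU hu hv x y ψ

theorem le_span_one_of_forall_commute (h2 : (2 : F) ≠ 0) (hU : ∀ u ∈ U, ∀ a, ⁅u, a⁆ ∈ U)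
    (hcomm : ∀ p ∈ U, ∀ q ∈ U, p * q = q * p) : U ≤ Submodule.span F {1} := by
  intro u hu
  have hlie (a : Module.End F V) : ⁅u, ⁅u, a⁆⁆ ∈ (⊥ : TwoSidedIdeal (Module.End F V)) :=
    (TwoSidedIdeal.mem_bot _).mpr (sub_eq_zero.mpr (hcomm u hu _ (hU u hu a)))
  refine mem_span_one_of_forall_commute fun a => sub_eq_zero.mp ?_
  exact eq_zero_of_forall_mul_mul_self_eq_zero fun c => (TwoSidedIdeal.mem_bot _).mp
    (lie_mul_mul_lie_mem_of_forall_lie_lie_mem ⊥ (isUnit_two h2) hlie a a c)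

theorem lie_mem_of_rank_lt_aleph0 (hU : ∀ u ∈ U, ∀ a, ⁅u, a⁆ ∈ U) {p q : Module.End F V}
    (hp : p ∈ U) (hq : q ∈ U) (hpq : p * q ≠ q * p) {φ : Module.End F V} (hφ : φ.rank < ℵ₀)
    (ψ : Module.End F V) : ⁅φ, ψ⁆ ∈ U := by
  have h1 : 1 ≤ ⁅p, q⁆.rank := Cardinal.one_le_iff_ne_zero.mpr
    (by simpa [LinearMap.rank, LinearMap.range_eq_bot, Ring.lie_def, sub_eq_zero] using hpq)
  have hspan := mem_span_rank_le_one_of_rank_lt_aleph0 hφ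
  clear hφ
  induction hspan using Submodule.span_induction with
  | mem x hx => exact lie_mem_of_rank_le_rank_lie hU hp hq (le_trans hx h1) ψ
  | zero => simp [Ring.lie_def]
  | add x y _ _ hx hy =>
    have h : ⁅x + y, ψ⁆ = ⁅x, ψ⁆ + ⁅y, ψ⁆ := by simp only [Ring.lie_def]; noncomm_ring
    exact h ▸ add_mem hx hy
  | smul c x _ hx =>
    have h : ⁅c • x, ψ⁆ = c • ⁅x, ψ⁆ := by
      simp only [Ring.lie_def, smul_sub, smul_mul_assoc, mul_smul_comm]
    exact h ▸ U.smul_mem c hx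

theorem le_span_one_sup_rankIdeal_or_forall_mem (h2 : (2 : F) ≠ 0) (hV : ℵ₀ ≤ Module.rank F V)
    (hU : ∀ u ∈ U, ∀ a, ⁅u, a⁆ ∈ U) {β : Cardinal} (hβ : ℵ₀ ≤ β) :
    U ≤ Submodule.span F {1} ⊔ rankIdeal F V β hβ ∨ ∀ φ : Module.End F V, φ.rank ≤ β → φ ∈ U := by
  refine or_iff_not_imp_left.mpr fun hle φ hφ => ?_
  obtain ⟨u, hu, hnot⟩ := SetLike.not_le_iff_exists.mp hle
  have hu' (c : F) : β ≤ (u - c • 1).rank :=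
    not_lt.mp fun h => hnot (mem_span_one_sup_rankIdeal.mpr ⟨c, h⟩)
  obtain ⟨a, ha⟩ := exists_le_rank_lie_lie h2 hβ hu'
  obtain ⟨r, ψ, hr, rfl⟩ := exists_eq_lie_of_rank_le hV hβ hφ
  exact lie_mem_of_rank_le_rank_lie hU hu (hU u hu a) (hr.trans ha) ψ

theorem eq_top_or_exists_rankIdeal_le (h2 : (2 : F) ≠ 0) (hV : ℵ₀ ≤ Module.rank F V)
    (hU : ∀ u ∈ U, ∀ a, ⁅u, a⁆ ∈ U) :
    U = ⊤ ∨ ∃ α : Cardinal, ∃ hα : ℵ₀ ≤ α, α ≤ Module.rank F V ∧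
      U ≤ Submodule.span F {1} ⊔ rankIdeal F V α hα ∧ (ℵ₀ < α → rankIdeal F V α hα ≤ U) := by
  have hdich (β) (hβ : ℵ₀ ≤ β) := le_span_one_sup_rankIdeal_or_forall_mem h2 hV hU hβ
  by_cases hT : ∃ β, ∃ hβ : ℵ₀ ≤ β, β ≤ Module.rank F V ∧
      U ≤ Submodule.span F {1} ⊔ rankIdeal F V β hβ
  · obtain ⟨α, ⟨hα, hαV, hUα⟩, hmin⟩ := wellFounded_lt.has_min _ hT
    refine Or.inr ⟨α, hα, hαV, hUα, fun hα' φ hφ => ?_⟩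
    have hβα : max φ.rank ℵ₀ < α := max_lt hφ hα'
    refine (hdich _ (le_max_right _ _)).resolve_left (fun h => hmin _ ⟨le_max_right _ _,
      hβα.le.trans hαV, h⟩ hβα) φ (le_max_left _ _)
  · push Not at hT
    exact Or.inl (eq_top_iff.mpr fun φ _ =>
      (hdich _ hV).resolve_left (hT _ hV le_rfl) φ (LinearMap.rank_le_domain φ))

end LieIdeal

end Module.End

/-- Classification of the ideals of the Lie algebra `gl(V)` for an infinite-dimensional space
`V` over a field of characteristic `≠ 2`. -/
theorem lie_ideals_of_gl_classification (h2 : (2 : F) ≠ 0) (hV : ℵ₀ ≤ Module.rank F V)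
    (U : Submodule F (Module.End F V))
    (hU : ∀ u ∈ U, ∀ a : Module.End F V, u * a - a * u ∈ U) :
    U = ⊥ ∨ U = Submodule.span F {(1 : Module.End F V)} ∨ U = ⊤ ∨
      (∃ α : Cardinal, ∃ hα : ℵ₀ ≤ α, α ≤ Module.rank F V ∧
        (U = rankIdeal F V α hα ∨
          U = Submodule.span F {(1 : Module.End F V)} ⊔ rankIdeal F V α hα)) ∨
      (Submodule.span F {x : Module.End F V | ∃ φ ψ : Module.End F V,
          LinearMap.rank φ < ℵ₀ ∧ x = φ * ψ - ψ * φ} ≤ U ∧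
        U ≤ Submodule.span F {(1 : Module.End F V)} ⊔ rankIdeal F V ℵ₀ le_rfl) := by
  by_cases hcomm : ∀ p ∈ U, ∀ q ∈ U, p * q = q * p
  · have hle : U ≤ Submodule.span F {1} ⊔ ⊥ := by
      simpa using Module.End.le_span_one_of_forall_commute h2 hU hcomm
    rcases Submodule.eq_or_eq_sup_span_singleton_of_le_of_le bot_le hle with h | h
    · exact Or.inl h
    · exact Or.inr (Or.inl (by simpa using h))
  push Not at hcomm
  obtain ⟨p, hp, q, hq, hpq⟩ := hcomm
  rcases Module.End.eq_top_or_exists_rankIdeal_le h2 hV hU with hT | ⟨α, hα, hαV, hUα, hαU⟩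
  · exact Or.inr (Or.inr (Or.inl hT))
  obtain rfl | hα' := hα.eq_or_lt
  · refine Or.inr (Or.inr (Or.inr (Or.inr ⟨Submodule.span_le.mpr ?_, hUα⟩)))
    rintro _ ⟨φ, ψ, hφ, rfl⟩
    exact Module.End.lie_mem_of_rank_lt_aleph0 hU hp hq hpq hφ ψ
  · exact Or.inr (Or.inr (Or.inr (Or.inl ⟨α, hα, hαV,
      Submodule.eq_or_eq_sup_span_singleton_of_le_of_le (hαU hα') hUα⟩)))
end
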